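/- arXiv:1709.05052 — 8 statements merged into one kernel-verified Lean document; each statement's English description precedes it below -/
import Mathlib

section
/- For every path P_n on n vertices, the Roman domination number of P_n equals ⌈2n/3⌉. -/
def IsRDF {V : Type*} (G : SimpleGraph V) (f : V → ℕ) : Prop :=
  (∀ v, f v ≤ 2) ∧ ∀ v, f v = 0 → ∃ u, G.Adj v u ∧ f u = 2

noncomputable def gammaR {V : Type*} [Fintype V] (G : SimpleGraph V) : ℕ :=
  sInf {w | ∃ f, IsRDF G f ∧ ∑ v, f v = w}

def IsMinRDF {V : Type*} [Fintype V] (G : SimpleGraph V) (f : V → ℕ) : Prop :=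
  IsRDF G f ∧ ∑ v, f v = gammaR G

noncomputable instance myInstSetFintype {V : Type*} [Fintype V] (s : Set V) : Fintype s :=
  s.toFinite.fintype

lemma sum_period (n : ℕ) :
    ∑ i ∈ Finset.range n, (if i % 3 = 1 then 2 else 0) = 2 * ((n + 1) / 3) := by
  induction n with
  | zero => simp
  | succ n ih =>
    rw [Finset.sum_range_succ, ih]
    by_cases h : n % 3 = 1 <;> simp [h] <;> omega

lemma upper_bound (n : ℕ) :
    ∃ f : Fin n → ℕ, IsRDF (SimpleGraph.pathGraph n) f ∧ ∑ v, f v = (2 * n + 2) / 3 := by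
  refine ⟨fun i => if i.val % 3 = 1 then 2 else if n % 3 = 1 ∧ i.val = n - 1 then 1 else 0,
    ⟨fun v => by dsimp only; split <;> [omega; (split <;> omega)], ?_⟩, ?_⟩
  · intro v hv
    by_cases h1 : v.val % 3 = 1
    · simp [h1] at hv
    by_cases h0 : v.val % 3 = 0
    · have hlt : v.val + 1 < n := by
        have hvn := v.isLt
        rcases Nat.lt_or_ge (v.val + 1) n with h | h
        · exact h
        · exfalso
          have he : v.val = n - 1 := by omega
          have hm : n % 3 = 1 := by omega
          have hmm : (n - 1) % 3 ≠ 1 := by omega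
          simp [h1, hm, he, hmm] at hv
      refine ⟨⟨v.val + 1, hlt⟩, ?_, ?_⟩
      · rw [SimpleGraph.pathGraph_adj]; left; rfl
      · have : (v.val + 1) % 3 = 1 := by omega
        simp [this]
    · have h2 : v.val % 3 = 2 := by omega
      refine ⟨⟨v.val - 1, by omega⟩, ?_, ?_⟩
      · rw [SimpleGraph.pathGraph_adj]; right; simp; omega
      · have : (v.val - 1) % 3 = 1 := by omega
        simp [this]
  · dsimp only
    rw [Fin.sum_univ_eq_sum_range
      (fun i => if i % 3 = 1 then 2 else if n % 3 = 1 ∧ i = n - 1 then 1 else 0) n]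
    have hsplit : ∀ i : ℕ, (if i % 3 = 1 then 2 else if n % 3 = 1 ∧ i = n - 1 then 1 else 0)
        = (if i % 3 = 1 then 2 else 0)
          + (if ¬ i % 3 = 1 ∧ n % 3 = 1 ∧ i = n - 1 then 1 else 0) := by
      intro i
      split_ifs <;> omega
    simp_rw [hsplit]
    rw [Finset.sum_add_distrib, sum_period]
    by_cases hn : n % 3 = 1
    · have hcong : ∀ i ∈ Finset.range n,
          (if ¬ i % 3 = 1 ∧ n % 3 = 1 ∧ i = n - 1 then 1 else 0)
            = (if i = n - 1 then 1 else 0) := by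
        intro i _
        by_cases he : i = n - 1
        · have h3 : ¬ (n - 1) % 3 = 1 := by omega
          simp [he, h3, hn]
        · simp [he]
      rw [Finset.sum_congr rfl hcong, Finset.sum_ite_eq' (Finset.range n) (n-1) (fun _ => 1)]
      have : n - 1 ∈ Finset.range n := by
        rw [Finset.mem_range]; omega
      simp only [this, if_pos]
      omega
    · have hcong : ∀ i ∈ Finset.range n,
          (if ¬ i % 3 = 1 ∧ n % 3 = 1 ∧ i = n - 1 then 1 else 0) = 0 := by
        intro i _
        simp [hn]
      rw [Finset.sum_congr rfl hcong]
      simp only [Finset.sum_const_zero]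
      omega

lemma lower_bound (n : ℕ) (f : Fin n → ℕ) (hf : IsRDF (SimpleGraph.pathGraph n) f) :
    2 * n ≤ 3 * ∑ v, f v := by
  classical
  set s0 := Finset.univ.filter (fun v => f v = 0) with hs0
  set s1 := Finset.univ.filter (fun v => f v = 1) with hs1
  set s2 := Finset.univ.filter (fun v => f v = 2) with hs2
  -- sum equals s1.card + 2 * s2.card
  have hsum : ∑ v, f v = s1.card + 2 * s2.card := by
    have : ∀ v : Fin n, f v = (if f v = 1 then 1 else 0) + 2 * (if f v = 2 then 1 else 0) := by
      intro v
      have := hf.1 v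
      interval_cases h : f v <;> simp
    rw [Finset.sum_congr rfl (fun v _ => this v), Finset.sum_add_distrib, ← Finset.mul_sum]
    rw [Finset.sum_boole, Finset.sum_boole]
    simp [hs1, hs2]
  -- n ≤ a + b + c
  have hcover : n ≤ s0.card + s1.card + s2.card := by
    have huniv : (Finset.univ : Finset (Fin n)) ⊆ s0 ∪ s1 ∪ s2 := by
      intro v _
      have := hf.1 v
      simp only [Finset.mem_union, hs0, hs1, hs2, Finset.mem_filter, Finset.mem_univ, true_and]
      omega
    calc n = (Finset.univ : Finset (Fin n)).card := by simp
      _ ≤ (s0 ∪ s1 ∪ s2).card := Finset.card_le_card huniv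
      _ ≤ (s0 ∪ s1).card + s2.card := Finset.card_union_le _ _
      _ ≤ s0.card + s1.card + s2.card := by
          have := Finset.card_union_le s0 s1
          omega
  -- a ≤ 2 c
  have hkey : s0.card ≤ 2 * s2.card := by
    have hex : ∀ v ∈ s0, ∃ u, (SimpleGraph.pathGraph n).Adj v u ∧ f u = 2 := by
      intro v hv
      exact hf.2 v (by simpa [hs0] using hv)
    set g : Fin n → Fin n := fun v =>
      if h : ∃ u, (SimpleGraph.pathGraph n).Adj v u ∧ f u = 2 then h.choose else v with hg
    have hgadj : ∀ v ∈ s0, (SimpleGraph.pathGraph n).Adj v (g v) ∧ f (g v) = 2 := by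
      intro v hv
      have h := hex v hv
      simp only [hg, dif_pos h]
      exact h.choose_spec
    have hmaps : ∀ v ∈ s0, g v ∈ s2 := by
      intro v hv
      simp only [hs2, Finset.mem_filter, Finset.mem_univ, true_and]
      exact (hgadj v hv).2
    refine Finset.card_le_mul_card_image_of_maps_to hmaps 2 ?_
    intro u _
    have hsub : ∀ v ∈ s0.filter (fun x => g x = u), v.val ∈ ({u.val - 1, u.val + 1} : Finset ℕ) := by
      intro v hv
      rw [Finset.mem_filter] at hv
      have hadj := (hgadj v hv.1).1
      rw [hv.2] at hadj
      rw [SimpleGraph.pathGraph_adj] at hadj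
      simp only [Finset.mem_insert, Finset.mem_singleton]
      omega
    calc (s0.filter (fun x => g x = u)).card
        ≤ ({u.val - 1, u.val + 1} : Finset ℕ).card :=
          Finset.card_le_card_of_injOn (fun v => v.val) hsub
            (fun a _ b _ h => Fin.val_injective h)
      _ ≤ 2 := Finset.card_insert_le _ _ |>.trans (by simp)
  omega

theorem gammaR_pathGraph (n : ℕ) :
    (gammaR (SimpleGraph.pathGraph n) : ℤ) = ⌈(2 * n / 3 : ℚ)⌉ := by
  obtain ⟨f₀, hf₀, hsum₀⟩ := upper_bound n
  have hmem : (2 * n + 2) / 3 ∈ {w | ∃ f, IsRDF (SimpleGraph.pathGraph n) f ∧ ∑ v, f v = w} :=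
    ⟨f₀, hf₀, hsum₀⟩
  have hgamma : gammaR (SimpleGraph.pathGraph n) = (2 * n + 2) / 3 := by
    refine le_antisymm (Nat.sInf_le hmem) (le_csInf ⟨_, hmem⟩ ?_)
    rintro w ⟨f, hf, hw⟩
    have := lower_bound n f hf
    omega
  rw [hgamma]
  set k := (2 * n + 2) / 3 with hk
  have h1 : 3 * k ≤ 2 * n + 2 := by omega
  have h2 : 2 * n ≤ 3 * k := by omega
  have h1' : (3 * k : ℚ) ≤ 2 * n + 2 := by exact_mod_cast h1
  have h2' : (2 * n : ℚ) ≤ 3 * k := by exact_mod_cast h2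
  symm
  rw [Int.ceil_eq_iff]
  constructor
  · push_cast
    rw [lt_div_iff₀ (by norm_num : (0:ℚ) < 3)]
    linarith
  · push_cast
    rw [div_le_iff₀ (by norm_num : (0:ℚ) < 3)]
    linarith
end

section
/- For every cycle C_n on n ≥ 3 vertices, the Roman domination number of C_n equals ⌈2n/3⌉. -/
/-!
Lower bound: a vertex labelled `0` is adjacent to a vertex labelled `2`, and each vertex of the
cycle has only two neighbours, so `n ≤ n₁ + 3 n₂` where `nᵢ` counts the vertices labelled `i`;
hence `3 (n₁ + 2 n₂) ≥ 2 n`. Upper bound: `C_n` contains the spanning path `P_n`, on which the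
labelling `0, 2, 0, 0, 2, 0, …` (with a `1` on the last vertex when `n ≡ 1 mod 3`, since it is
then undominated) has weight `⌈2n/3⌉`.
-/

open Finset SimpleGraph

section

variable {V : Type*} {G H : SimpleGraph V} {f : V → ℕ}

lemma isRDF_one (G : SimpleGraph V) : IsRDF G 1 :=
  ⟨fun _ => by simp, fun _ h => absurd h one_ne_zero⟩

lemma IsRDF.mono (hGH : G ≤ H) (hf : IsRDF G f) : IsRDF H f :=
  ⟨hf.1, fun v hv => (hf.2 v hv).imp fun _ hu => ⟨hGH hu.1, hu.2⟩⟩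

variable [Fintype V]

lemma gammaR_le_sum (hf : IsRDF G f) : gammaR G ≤ ∑ v, f v :=
  Nat.sInf_le ⟨f, hf, rfl⟩

lemma exists_isMinRDF (G : SimpleGraph V) : ∃ f, IsMinRDF G f :=
  have hne : {w | ∃ f, IsRDF G f ∧ ∑ v, f v = w}.Nonempty := ⟨_, 1, isRDF_one G, rfl⟩
  Nat.sInf_mem hne

lemma gammaR_anti (hGH : G ≤ H) : gammaR H ≤ gammaR G := by
  obtain ⟨f, hf, hsum⟩ := exists_isMinRDF G
  exact hsum ▸ gammaR_le_sum (hf.mono hGH)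

lemma IsRDF.two_mul_card_le [DecidableRel G.Adj] {Δ : ℕ} (hΔ : 1 ≤ Δ)
    (hdeg : ∀ v, G.degree v ≤ Δ) (hf : IsRDF G f) :
    2 * Fintype.card V ≤ (Δ + 1) * ∑ v, f v := by
  classical
  have hzeros : #{v | f v = 0} ≤ Δ * #{v | f v = 2} := by
    have hcover : ({v | f v = 0} : Finset V) ⊆ ({v | f v = 2} : Finset V).biUnion
        fun u => G.neighborFinset u := by
      intro v hv
      obtain ⟨u, hvu, hu⟩ := hf.2 v (mem_filter.1 hv).2
      exact mem_biUnion.2 ⟨u, mem_filter.2 ⟨mem_univ _, hu⟩, (G.mem_neighborFinset _ _).2 hvu.symm⟩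
    calc #{v | f v = 0} ≤ ∑ u ∈ {v | f v = 2}, G.degree u :=
          (card_le_card hcover).trans card_biUnion_le
      _ ≤ Δ * #{v | f v = 2} := by
          rw [mul_comm]; exact sum_le_card_nsmul _ _ _ fun u _ => hdeg u
  have hpointwise : ∀ v, 2 + 2 * Δ * (if f v = 2 then 1 else 0) ≤
      (Δ + 1) * f v + 2 * (if f v = 0 then 1 else 0) := by
    intro v
    have := hf.1 v
    interval_cases f v <;> simp <;> omega
  have hsum := sum_le_sum fun v (_ : v ∈ univ) => hpointwise v
  simp only [sum_add_distrib, ← mul_sum, ← card_filter, sum_const, smul_eq_mul] at hsum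
  rw [card_univ] at hsum
  nlinarith

lemma two_mul_card_le_mul_gammaR [DecidableRel G.Adj] {Δ : ℕ} (hΔ : 1 ≤ Δ)
    (hdeg : ∀ v, G.degree v ≤ Δ) : 2 * Fintype.card V ≤ (Δ + 1) * gammaR G := by
  obtain ⟨f, hf, hsum⟩ := exists_isMinRDF G
  exact hsum ▸ hf.two_mul_card_le hΔ hdeg

end

lemma sum_range_ite_mod_three_eq_one (m : ℕ) :
    ∑ i ∈ range m, (if i % 3 = 1 then 2 else 0) = 2 * ((m + 1) / 3) := by
  induction m with
  | zero => rfl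
  | succ m ih => rw [sum_range_succ, ih]; split_ifs <;> omega

def pathRDF (n : ℕ) (i : ℕ) : ℕ :=
  if i % 3 = 1 then 2 else if i + 1 = n ∧ i % 3 = 0 then 1 else 0

lemma isRDF_pathRDF (n : ℕ) : IsRDF (pathGraph n) fun i => pathRDF n i := by
  refine ⟨fun i => show pathRDF n i ≤ 2 by unfold pathRDF; split_ifs <;> omega, fun i hi => ?_⟩
  have hlabel : i.val % 3 ≠ 1 ∧ ¬(i.val + 1 = n ∧ i.val % 3 = 0) := by
    change pathRDF n i = 0 at hi
    unfold pathRDF at hi; split_ifs at hi; simp_all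
  obtain ⟨j, hj, hij⟩ : ∃ j : Fin n, j.val % 3 = 1 ∧ (pathGraph n).Adj i j := by
    by_cases h0 : i.val % 3 = 0
    · exact ⟨⟨i + 1, by omega⟩, by simp only; omega, by simp [pathGraph_adj]⟩
    · exact ⟨⟨i - 1, by omega⟩, by simp only; omega, by simp only [pathGraph_adj]; omega⟩
  exact ⟨j, hij, by simp [pathRDF, hj]⟩

lemma sum_pathRDF (n : ℕ) : ∑ i : Fin n, pathRDF n i = (2 * n + 2) / 3 := by
  rw [Fin.sum_univ_eq_sum_range (pathRDF n)]
  cases n with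
  | zero => rfl
  | succ k =>
    have hinit : ∀ i ∈ range k, pathRDF (k + 1) i = if i % 3 = 1 then 2 else 0 := by
      intro i hi
      have := mem_range.1 hi
      unfold pathRDF; split_ifs <;> omega
    rw [sum_range_succ, sum_congr rfl hinit, sum_range_ite_mod_three_eq_one]
    unfold pathRDF; split_ifs <;> omega

lemma gammaR_pathGraph_le (n : ℕ) : gammaR (pathGraph n) ≤ (2 * n + 2) / 3 :=
  sum_pathRDF n ▸ gammaR_le_sum (isRDF_pathRDF n)

lemma cycleGraph_degree_le_two (n : ℕ) (v : Fin n) : (cycleGraph n).degree v ≤ 2 := by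
  -- `convert` reconciles the preamble's `Fintype` instance on neighbour sets with Mathlib's.
  match n with
  | 0 => exact v.elim0
  | 1 =>
    have h : (cycleGraph 1).degree v < Fintype.card (Fin 1) := by
      convert (cycleGraph 1).degree_lt_card_verts v
    rw [Fintype.card_fin] at h
    omega
  | k + 2 => convert (cycleGraph_degree_two_le (v := v)).trans_le card_le_two

theorem gammaR_cycleGraph_general (n : ℕ) :
    (gammaR (SimpleGraph.cycleGraph n) : ℤ) = ⌈(2 * n / 3 : ℚ)⌉ := by
  have hlower : 2 * n ≤ 3 * gammaR (cycleGraph n) := by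
    simpa using two_mul_card_le_mul_gammaR one_le_two (cycleGraph_degree_le_two n)
  have hupper : gammaR (cycleGraph n) ≤ (2 * n + 2) / 3 :=
    (gammaR_anti pathGraph_le_cycleGraph).trans (gammaR_pathGraph_le n)
  have hceil := Rat.ceil_natCast_div_natCast (2 * n) 3
  push_cast at hceil
  rw [hceil]
  omega

theorem gammaR_cycleGraph (n : ℕ) (hn : 3 ≤ n) :
    (gammaR (SimpleGraph.cycleGraph n) : ℤ) = ⌈(2 * n / 3 : ℚ)⌉ :=
  gammaR_cycleGraph_general n
end

section
/- Let f = (V_0; V_1; V_2) be a Roman dominating function of minimum weight on a graph G. Then every vertex in V_1 has at most one neighbor in V_1, and no edge of G joins a vertex of V_1 to a vertex of V_2. -/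
theorem minRDF_V1_structure {V : Type*} [Fintype V] (G : SimpleGraph V) (f : V → ℕ)
    (hf : IsMinRDF G f) :
    (∀ v, f v = 1 → {u | G.Adj v u ∧ f u = 1}.Subsingleton) ∧
    (∀ u v, G.Adj u v → ¬(f u = 1 ∧ f v = 2)) := by
  classical
  obtain ⟨⟨hle, hdom⟩, hmin⟩ := hf
  have key : ∀ g : V → ℕ, IsRDF G g → ∑ v, f v ≤ ∑ v, g v := by
    intro g hg
    rw [hmin]
    exact Nat.sInf_le ⟨g, hg, rfl⟩
  constructor
  · intro v hv u1 hu1 u2 hu2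
    by_contra hne
    obtain ⟨hadj1, hf1⟩ := hu1
    obtain ⟨hadj2, hf2⟩ := hu2
    set g : V → ℕ := fun w => if w = v then 2 else if w = u1 ∨ w = u2 then 0 else f w with hg
    have hvu1 : v ≠ u1 := fun h => G.irrefl (h ▸ hadj1)
    have hvu2 : v ≠ u2 := fun h => G.irrefl (h ▸ hadj2)
    have hgRDF : IsRDF G g := by
      constructor
      · intro w
        simp only [hg]
        split_ifs with h1 h2
        · exact le_refl 2
        · exact Nat.zero_le 2
        · exact hle w
      · intro w hw
        simp only [hg] at hw
        split_ifs at hw with h1 h2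
        · rcases h2 with h | h
          · subst h
            exact ⟨v, hadj1.symm, by simp [hg]⟩
          · subst h
            exact ⟨v, hadj2.symm, by simp [hg]⟩
        · obtain ⟨x, hx, hx2⟩ := hdom w hw
          refine ⟨x, hx, ?_⟩
          have hxv : x ≠ v := fun h => by subst h; omega
          have hxu1 : x ≠ u1 := fun h => by subst h; omega
          have hxu2 : x ≠ u2 := fun h => by subst h; omega
          simp [hg, hxv, hxu1, hxu2, hx2]
    have hsum : ∑ w, g w < ∑ w, f w := by
      have hsub : ({v, u1, u2} : Finset V) ⊆ Finset.univ := Finset.subset_univ _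
      have split : ∀ F : V → ℕ, ∑ w, F w =
          ∑ w ∈ Finset.univ \ {v, u1, u2}, F w + (F v + (F u1 + F u2)) := by
        intro F
        rw [← Finset.sum_sdiff hsub]
        congr 1
        rw [Finset.sum_insert (by simp [hvu1, hvu2]), Finset.sum_insert (by simp [hne]),
          Finset.sum_singleton]
      rw [split f, split g]
      have heq : ∑ w ∈ Finset.univ \ {v, u1, u2}, g w =
          ∑ w ∈ Finset.univ \ {v, u1, u2}, f w := by
        apply Finset.sum_congr rfl
        intro x hx
        simp only [Finset.mem_sdiff, Finset.mem_insert, Finset.mem_singleton] at hx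
        push_neg at hx
        simp [hg, hx.2.1, hx.2.2.1, hx.2.2.2]
      rw [heq]
      have : g v = 2 := by simp [hg]
      have h1 : g u1 = 0 := by simp [hg, hvu1.symm]
      have h2 : g u2 = 0 := by simp [hg, hvu2.symm, hne]
      omega
    exact absurd (key g hgRDF) (by omega)
  · rintro u v huv ⟨hu, hv⟩
    set g : V → ℕ := Function.update f u 0 with hg
    have huv' : u ≠ v := G.ne_of_adj huv
    have hgRDF : IsRDF G g := by
      constructor
      · intro w
        simp only [hg, Function.update_apply]
        split_ifs with h
        · exact Nat.zero_le 2
        · exact hle w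
      · intro w hw
        by_cases hwu : w = u
        · subst hwu
          refine ⟨v, huv, ?_⟩
          simp [hg, Function.update_apply, huv'.symm, hv]
        · have : f w = 0 := by simpa [hg, Function.update_apply, hwu] using hw
          obtain ⟨x, hx, hx2⟩ := hdom w this
          refine ⟨x, hx, ?_⟩
          have hxu : x ≠ u := fun h => by subst h; omega
          simp [hg, Function.update_apply, hxu, hx2]
    have hsum : ∑ w, g w < ∑ w, f w := by
      apply Finset.sum_lt_sum
      · intro i _
        simp only [hg, Function.update_apply]
        split_ifs with h
        · subst h; omega
        · exact le_refl _
      · exact ⟨u, Finset.mem_univ u, by simp [hg, hu]⟩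
    exact absurd (key g hgRDF) (by omega)
end

section
/- Let v be a vertex of a graph G. Then γ_R(G − v) < γ_R(G) if and only if there exists a minimum-weight Roman dominating function f on G with f(v) = 1. Moreover, if γ_R(G − v) < γ_R(G) then γ_R(G − v) = γ_R(G) − 1. -/
theorem gammaR_vertex_removal_decrease {V : Type*} [Fintype V] (G : SimpleGraph V) (v : V) :
    (gammaR (G.induce {u | u ≠ v}) < gammaR G ↔ ∃ f, IsMinRDF G f ∧ f v = 1) ∧
    (gammaR (G.induce {u | u ≠ v}) < gammaR G →
      gammaR (G.induce {u | u ≠ v}) = gammaR G - 1) := by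
  classical
  set S : Set V := {u | u ≠ v} with hS
  set G' := G.induce S with hG'
  -- sum splitting
  have sumsplit : ∀ f : V → ℕ, ∑ u, f u = f v + ∑ u : S, f u.1 := by
    intro f
    rw [← Finset.add_sum_erase Finset.univ f (Finset.mem_univ v)]
    congr 1
    exact Finset.sum_subtype _ (fun x => by simp [hS]) f
  -- nonemptiness of both sets
  have hne : {w | ∃ f, IsRDF G f ∧ ∑ u, f u = w}.Nonempty :=
    ⟨∑ _u : V, 1, fun _ => 1, ⟨fun _ => one_le_two, fun u h => absurd h one_ne_zero⟩, rfl⟩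
  have hne' : {w | ∃ f, IsRDF G' f ∧ ∑ u, f u = w}.Nonempty :=
    ⟨∑ _u : S, 1, fun _ => 1, ⟨fun _ => one_le_two, fun u h => absurd h one_ne_zero⟩, rfl⟩
  have hmem : gammaR G ∈ {w | ∃ f, IsRDF G f ∧ ∑ u, f u = w} := Nat.sInf_mem hne
  have hmem' : gammaR G' ∈ {w | ∃ f, IsRDF G' f ∧ ∑ u, f u = w} := Nat.sInf_mem hne'
  -- forward-direction machinery: extend a min RDF of G'
  have fwd : gammaR G' < gammaR G →
      (∃ f, IsMinRDF G f ∧ f v = 1) ∧ gammaR G' = gammaR G - 1 := by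
    intro hlt
    obtain ⟨f', hf', hsum'⟩ := hmem'
    set g : V → ℕ := fun u => if h : u = v then 1 else f' ⟨u, h⟩ with hg
    have hgv : g v = 1 := by simp [hg]
    have hgsub : ∀ u : S, g u.1 = f' u := by
      intro u
      have : (u.1 : V) ≠ v := u.2
      simp [hg, this]
    have hgsum : ∑ u, g u = gammaR G' + 1 := by
      rw [sumsplit g, hgv]
      rw [Finset.sum_congr rfl (fun u _ => hgsub u), hsum']
      omega
    have hgRDF : IsRDF G g := by
      constructor
      · intro u
        by_cases h : u = v
        · simp [hg, h]
        · simpa [hg, h] using hf'.1 ⟨u, h⟩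
      · intro u hu
        by_cases h : u = v
        · simp [hg, h] at hu
        · have hu0 : f' ⟨u, h⟩ = 0 := by simpa [hg, h] using hu
          obtain ⟨w, hadj, hw2⟩ := hf'.2 ⟨u, h⟩ hu0
          refine ⟨w.1, hadj, ?_⟩
          rw [hgsub w]; exact hw2
    have hle : gammaR G ≤ gammaR G' + 1 := Nat.sInf_le ⟨g, hgRDF, hgsum⟩
    have heq : gammaR G = gammaR G' + 1 := by omega
    exact ⟨⟨g, ⟨hgRDF, by omega⟩, hgv⟩, by omega⟩
  have bwd : (∃ f, IsMinRDF G f ∧ f v = 1) → gammaR G' < gammaR G := by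
    rintro ⟨f, ⟨hfRDF, hfsum⟩, hfv⟩
    set f' : S → ℕ := fun u => f u.1 with hf'
    have hRDF' : IsRDF G' f' := by
      constructor
      · intro u; exact hfRDF.1 u.1
      · intro u hu
        obtain ⟨w, hadj, hw2⟩ := hfRDF.2 u.1 hu
        have hwv : w ≠ v := by intro h; rw [h, hfv] at hw2; omega
        exact ⟨⟨w, hwv⟩, hadj, hw2⟩
    have hsum' : ∑ u : S, f u.1 = gammaR G - 1 := by
      have := sumsplit f
      rw [hfsum, hfv] at this
      omega
    have hpos : 1 ≤ gammaR G := by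
      have h1 : f v ≤ ∑ u, f u :=
        Finset.single_le_sum (fun i _ => Nat.zero_le _) (Finset.mem_univ v)
      omega
    have hle : gammaR G' ≤ gammaR G - 1 := Nat.sInf_le ⟨f', hRDF', hsum'⟩
    exact lt_of_le_of_lt hle (Nat.sub_lt hpos one_pos)
  exact ⟨⟨fun h => (fwd h).1, bwd⟩, fun h => (fwd h).2⟩
end

section
/- Let v be a vertex of a graph G with γ_R(G − v) > γ_R(G). Then every minimum-weight Roman dominating function f on G satisfies f(v) = 2. -/
theorem gammaR_vertex_removal_increase {V : Type*} [Fintype V] (G : SimpleGraph V) (v : V)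
    (h : gammaR G < gammaR (G.induce {u | u ≠ v})) :
    ∀ f, IsMinRDF G f → f v = 2 := by
  intro f ⟨⟨hle, hdom⟩, hsum⟩
  by_contra hv
  -- restrict f to the vertex-deleted subgraph
  set s : Set V := {u | u ≠ v}
  have hRDF : IsRDF (G.induce s) (fun u : s => f u.1) := by
    constructor
    · intro u; exact hle u.1
    · rintro ⟨u, hu⟩ h0
      obtain ⟨w, hw, hw2⟩ := hdom u h0
      have hwv : w ≠ v := by rintro rfl; exact hv hw2
      exact ⟨⟨w, hwv⟩, hw, hw2⟩
  have hle' : gammaR (G.induce s) ≤ ∑ u : s, f u.1 :=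
    Nat.sInf_le ⟨_, hRDF, rfl⟩
  have hsum_le : ∑ u : s, f u.1 ≤ ∑ u, f u := by
    classical
    have : ∑ u : s, f u.1 = ∑ u ∈ Finset.univ.filter (· ∈ s), f u := by
      exact (Finset.sum_subtype _ (by simp) f).symm
    rw [this]
    exact Finset.sum_le_sum_of_subset (Finset.filter_subset _ _)
  have := hle'.trans (hsum_le.trans_eq hsum)
  omega
end

section
/- Let x and y be non-adjacent vertices of a graph G. Then γ_R(G) ≥ γ_R(G + xy) ≥ γ_R(G) − 1, and γ_R(G + xy) = γ_R(G) − 1 if and only if there exists a minimum-weight Roman dominating function f on G with {f(x), f(y)} = {1, 2}. -/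
section Helpers

variable {V : Type*} [Fintype V]

lemma rdf_one (G : SimpleGraph V) : IsRDF G (fun _ => 1) :=
  ⟨fun _ => one_le_two, fun _ h => absurd h one_ne_zero⟩

lemma gammaR_set_nonempty (G : SimpleGraph V) :
    {w | ∃ f, IsRDF G f ∧ ∑ v, f v = w}.Nonempty :=
  ⟨_, fun _ => 1, rdf_one G, rfl⟩

lemma exists_minRDF (G : SimpleGraph V) : ∃ f, IsRDF G f ∧ ∑ v, f v = gammaR G :=
  Nat.sInf_mem (gammaR_set_nonempty G)

lemma gammaR_le (G : SimpleGraph V) {f : V → ℕ} (hf : IsRDF G f) :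
    gammaR G ≤ ∑ v, f v :=
  Nat.sInf_le ⟨f, hf, rfl⟩

lemma gammaR_pos (G : SimpleGraph V) (v : V) : 1 ≤ gammaR G := by
  obtain ⟨f, hf, hsum⟩ := exists_minRDF G
  by_contra h
  have h0 : ∑ w, f w = 0 := by omega
  rw [Finset.sum_eq_zero_iff] at h0
  obtain ⟨u, _, hu2⟩ := hf.2 v (h0 v (Finset.mem_univ v))
  rw [h0 u (Finset.mem_univ u)] at hu2
  exact absurd hu2 (by norm_num)

lemma adj_sup_iff {x y : V} (hxy : x ≠ y) (G : SimpleGraph V) (u v : V) :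
    (G ⊔ SimpleGraph.fromEdgeSet {s(x, y)}).Adj u v ↔
      G.Adj u v ∨ (u = x ∧ v = y) ∨ (u = y ∧ v = x) := by
  simp only [SimpleGraph.sup_adj, SimpleGraph.fromEdgeSet_adj, Set.mem_singleton_iff,
    Sym2.eq_iff]
  constructor
  · rintro (h | ⟨(⟨rfl, rfl⟩ | ⟨rfl, rfl⟩), hne⟩) <;> tauto
  · rintro (h | ⟨rfl, rfl⟩ | ⟨rfl, rfl⟩)
    · exact Or.inl h
    · exact Or.inr ⟨Or.inl ⟨rfl, rfl⟩, hxy⟩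
    · exact Or.inr ⟨Or.inr ⟨rfl, rfl⟩, hxy.symm⟩

lemma rdf_mono (G : SimpleGraph V) (x y : V) {f : V → ℕ} (hf : IsRDF G f) :
    IsRDF (G ⊔ SimpleGraph.fromEdgeSet {s(x, y)}) f :=
  ⟨hf.1, fun v hv => by
    obtain ⟨u, hu, h2⟩ := hf.2 v hv
    exact ⟨u, Or.inl hu, h2⟩⟩

lemma patch_lemma [DecidableEq V] {x y : V} (hxy : x ≠ y) (G : SimpleGraph V) {f' : V → ℕ}
    (hf' : IsRDF (G ⊔ SimpleGraph.fromEdgeSet {s(x, y)}) f') (hnot : ¬ IsRDF G f') :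
    ∃ a b, ((a = x ∧ b = y) ∨ (a = y ∧ b = x)) ∧ f' a = 0 ∧ f' b = 2 ∧
      IsRDF G (Function.update f' a 1) ∧
      ∑ v, Function.update f' a 1 v = ∑ v, f' v + 1 := by
  rw [IsRDF] at hnot
  push_neg at hnot
  obtain ⟨v, hv0, hvno⟩ := hnot hf'.1
  obtain ⟨u, hadj', hu2⟩ := hf'.2 v hv0
  rw [adj_sup_iff hxy] at hadj'
  rcases hadj' with h | hcase
  · exact absurd hu2 (hvno u h)
  refine ⟨v, u, hcase, hv0, hu2, ⟨?_, ?_⟩, ?_⟩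
  · intro w
    rcases eq_or_ne w v with rfl | hwv
    · simp
    · rw [Function.update_of_ne hwv]; exact hf'.1 w
  · intro w hw
    have hwv : w ≠ v := by
      intro h; rw [h, Function.update_self] at hw; exact one_ne_zero hw
    rw [Function.update_of_ne hwv] at hw
    obtain ⟨u', hadj2, hu'2⟩ := hf'.2 w hw
    have hu'v : u' ≠ v := by
      intro h; rw [h, hv0] at hu'2; norm_num at hu'2
    rw [adj_sup_iff hxy] at hadj2
    rcases hadj2 with h | hcase2
    · exact ⟨u', h, by rw [Function.update_of_ne hu'v]; exact hu'2⟩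
    · exfalso
      rcases hcase with ⟨hv1, hu1⟩ | ⟨hv1, hu1⟩ <;>
        rcases hcase2 with ⟨hw1, hu'' ⟩ | ⟨hw1, hu''⟩
      · exact hwv (hw1.trans hv1.symm)
      · exact hu'v (hu''.trans hv1.symm)
      · exact hu'v (hu''.trans hv1.symm)
      · exact hwv (hw1.trans hv1.symm)
  · rw [Finset.sum_update_of_mem (Finset.mem_univ v)]
    have h := Finset.sum_eq_sum_sdiff_singleton_add (Finset.mem_univ v) f'
    omega

end Helpers

theorem gammaR_add_edge {V : Type*} [Fintype V] (G : SimpleGraph V) (x y : V)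
    (hxy : x ≠ y) (hadj : ¬G.Adj x y) :
    gammaR G ≥ gammaR (G ⊔ SimpleGraph.fromEdgeSet {s(x, y)}) ∧
    gammaR (G ⊔ SimpleGraph.fromEdgeSet {s(x, y)}) ≥ gammaR G - 1 ∧
    (gammaR (G ⊔ SimpleGraph.fromEdgeSet {s(x, y)}) = gammaR G - 1 ↔
      ∃ f, IsMinRDF G f ∧ ((f x = 1 ∧ f y = 2) ∨ (f x = 2 ∧ f y = 1))) := by
  classical
  set G' := G ⊔ SimpleGraph.fromEdgeSet {s(x, y)} with hG'
  have hpos : 1 ≤ gammaR G := gammaR_pos G x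
  have h1 : gammaR G' ≤ gammaR G := by
    obtain ⟨f, hf, hs⟩ := exists_minRDF G
    calc gammaR G' ≤ ∑ v, f v := gammaR_le G' (rdf_mono G x y hf)
      _ = gammaR G := hs
  have h2 : gammaR G ≤ gammaR G' + 1 := by
    obtain ⟨f', hf', hs'⟩ := exists_minRDF G'
    by_cases hR : IsRDF G f'
    · have := gammaR_le G hR; omega
    · obtain ⟨a, b, _, _, _, hrdf, hsum⟩ := patch_lemma hxy G hf' hR
      have := gammaR_le G hrdf
      omega
  refine ⟨h1, by omega, ?_, ?_⟩
  · intro heq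
    obtain ⟨f', hf', hs'⟩ := exists_minRDF G'
    have hR : ¬ IsRDF G f' := by
      intro h
      have := gammaR_le G h
      omega
    obtain ⟨a, b, hcase, ha0, hb2, hrdf, hsum⟩ := patch_lemma hxy G hf' hR
    refine ⟨Function.update f' a 1, ⟨hrdf, by omega⟩, ?_⟩
    rcases hcase with ⟨rfl, rfl⟩ | ⟨rfl, rfl⟩
    · left
      exact ⟨Function.update_self _ _ _, by rw [Function.update_of_ne hxy.symm]; exact hb2⟩
    · right
      exact ⟨by rw [Function.update_of_ne hxy]; exact hb2, Function.update_self _ _ _⟩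
  · rintro ⟨f, ⟨hf, hsum⟩, hcase⟩
    obtain ⟨a, b, habcase, ha1, hb2⟩ :
        ∃ a b, ((a = x ∧ b = y) ∨ (a = y ∧ b = x)) ∧ f a = 1 ∧ f b = 2 := by
      rcases hcase with ⟨h1', h2'⟩ | ⟨h1', h2'⟩
      · exact ⟨x, y, Or.inl ⟨rfl, rfl⟩, h1', h2'⟩
      · exact ⟨y, x, Or.inr ⟨rfl, rfl⟩, h2', h1'⟩
    have hba : b ≠ a := by intro h; rw [h, ha1] at hb2; norm_num at hb2
    have hg : IsRDF G' (Function.update f a 0) := by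
      constructor
      · intro w
        rcases eq_or_ne w a with rfl | hwa
        · simp
        · rw [Function.update_of_ne hwa]; exact hf.1 w
      · intro w hw
        rcases eq_or_ne w a with rfl | hwa
        · refine ⟨b, ?_, by rw [Function.update_of_ne hba]; exact hb2⟩
          rw [hG', adj_sup_iff hxy]
          rcases habcase with ⟨rfl, rfl⟩ | ⟨rfl, rfl⟩
          · exact Or.inr (Or.inl ⟨rfl, rfl⟩)
          · exact Or.inr (Or.inr ⟨rfl, rfl⟩)
        · rw [Function.update_of_ne hwa] at hw
          obtain ⟨u, huadj, hu2⟩ := hf.2 w hw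
          have hua : u ≠ a := by intro h; rw [h, ha1] at hu2; norm_num at hu2
          exact ⟨u, (adj_sup_iff hxy G w u).mp ((adj_sup_iff hxy G w u).mpr (Or.inl huadj)) |>.elim
            (fun h => by rw [hG']; exact Or.inl h) (fun h => by rw [hG', adj_sup_iff hxy]; exact Or.inr h),
            by rw [Function.update_of_ne hua]; exact hu2⟩
    have hsg : ∑ v, Function.update f a 0 v = gammaR G - 1 := by
      rw [Finset.sum_update_of_mem (Finset.mem_univ a)]
      have h := Finset.sum_eq_sum_sdiff_singleton_add (Finset.mem_univ a) f
      omega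
    have := gammaR_le G' hg
    omega
end

section
/- Let G be a graph such that the set V^−(G) = {v ∈ V(G) : γ_R(G − v) < γ_R(G)} contains a vertex cover of G. Then for every edge e of G, γ_R(G − e) = γ_R(G). -/
lemma rdf_set_nonempty {V : Type*} [Fintype V] (G : SimpleGraph V) :
    {w | ∃ f, IsRDF G f ∧ ∑ v, f v = w}.Nonempty :=
  ⟨∑ _v : V, 2, fun _ => 2, ⟨fun _ => le_refl 2, fun v h => by simp at h⟩, rfl⟩

lemma gammaR_le_of_rdf {V : Type*} [Fintype V] {G : SimpleGraph V} {f : V → ℕ}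
    (hf : IsRDF G f) : gammaR G ≤ ∑ v, f v :=
  Nat.sInf_le ⟨f, hf, rfl⟩

lemma exists_min_rdf {V : Type*} [Fintype V] (G : SimpleGraph V) :
    ∃ f, IsRDF G f ∧ ∑ v, f v = gammaR G :=
  Nat.sInf_mem (rdf_set_nonempty G)

lemma gammaR_anti_s6 {V : Type*} [Fintype V] {G H : SimpleGraph V}
    (h : ∀ a b, G.Adj a b → H.Adj a b) : gammaR H ≤ gammaR G := by
  obtain ⟨f, ⟨h1, h2⟩, hs⟩ := exists_min_rdf G
  rw [← hs]
  exact gammaR_le_of_rdf ⟨h1, fun v hv => (h2 v hv).imp fun u ⟨ha, hb⟩ => ⟨h v u ha, hb⟩⟩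

lemma gammaR_del_le {V : Type*} [Fintype V] (G : SimpleGraph V) (x y z : V)
    (hz : z = x ∨ z = y)
    (h : gammaR (G.induce {u | u ≠ z}) < gammaR G) :
    gammaR (G.deleteEdges {s(x, y)}) ≤ gammaR G := by
  classical
  obtain ⟨g, ⟨hg1, hg2⟩, hgs⟩ := exists_min_rdf (G.induce {u | u ≠ z})
  set f : V → ℕ := fun v => if hv : v = z then 1 else g ⟨v, hv⟩ with hf
  have hrdf : IsRDF (G.deleteEdges {s(x, y)}) f := by
    constructor
    · intro v
      by_cases hv : v = z
      · simp [hf, hv]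
      · simpa [hf, hv] using hg1 ⟨v, hv⟩
    · intro v hv0
      have hvz : v ≠ z := by
        intro hvz; simp [hf, hvz] at hv0
      have hg0 : g ⟨v, hvz⟩ = 0 := by simpa [hf, hvz] using hv0
      obtain ⟨u, hadj, hu2⟩ := hg2 _ hg0
      refine ⟨u, ?_, by simp only [hf, dif_neg u.2, Subtype.coe_eta]; exact hu2⟩
      rw [SimpleGraph.deleteEdges_adj]
      refine ⟨hadj, ?_⟩
      intro hmem
      simp only [Set.mem_singleton_iff] at hmem
      have hzmem : z ∈ (s(v, (u : V)) : Sym2 V) := by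
        rw [hmem]
        rcases hz with rfl | rfl
        · exact Sym2.mem_mk_left _ _
        · exact Sym2.mem_mk_right _ _
      rcases Sym2.mem_iff.mp hzmem with h1 | h1
      · exact hvz h1.symm
      · exact u.2 h1.symm
  have hsum : ∑ v, f v = 1 + ∑ u : {u | u ≠ z}, g u := by
    rw [← Finset.sum_erase_add _ _ (Finset.mem_univ z)]
    have h1 : f z = 1 := by simp [hf]
    rw [h1, add_comm]
    congr 1
    rw [Finset.sum_subtype (p := (· ∈ {u | u ≠ z})) (Finset.univ.erase z)
      (fun v => by simp [Finset.mem_erase, Set.mem_setOf_eq]) f]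
    apply Finset.sum_congr rfl
    intro a _
    have : (a : V) ≠ z := a.2
    simp [hf, this]
  calc gammaR (G.deleteEdges {s(x, y)}) ≤ ∑ v, f v := gammaR_le_of_rdf hrdf
    _ = 1 + ∑ u : {u | u ≠ z}, g u := hsum
    _ = 1 + gammaR (G.induce {u | u ≠ z}) := by rw [hgs]
    _ ≤ gammaR G := by omega

theorem gammaR_edge_removal_of_vertexCover {V : Type*} [Fintype V] (G : SimpleGraph V)
    (C : Set V)
    (hC : ∀ v ∈ C, gammaR (G.induce {u | u ≠ v}) < gammaR G)
    (hcover : ∀ x y, G.Adj x y → x ∈ C ∨ y ∈ C) :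
    ∀ x y, G.Adj x y → gammaR (G.deleteEdges {s(x, y)}) = gammaR G := by
  intro x y hxy
  have hge : gammaR G ≤ gammaR (G.deleteEdges {s(x, y)}) :=
    gammaR_anti_s6 (fun a b hab => (SimpleGraph.deleteEdges_adj.mp hab).1)
  have hle : gammaR (G.deleteEdges {s(x, y)}) ≤ gammaR G := by
    rcases hcover x y hxy with hx | hy
    · exact gammaR_del_le G x y x (Or.inl rfl) (hC x hx)
    · exact gammaR_del_le G x y y (Or.inr rfl) (hC y hy)
  omega
end

section
/- Let G be a tree, let f be a minimum-weight Roman dominating function on G, and let u, v ∈ V(G) with f(u) = 2 and f(v) = 0, such that the function f₁ obtained from f by swapping the labels of u and v (f₁(u) = 0, f₁(v) = 2, f₁ = f elsewhere) is again a Roman dominating function. Then u and v are adjacent, and the private neighborhood pn[u, V_2^f] = {u, v}. -/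
/-- The set of `X`-private neighbors of `x`: vertices `y` with `N[y] ∩ X = {x}`. -/
def privateNbrs {V : Type*} (G : SimpleGraph V) (x : V) (X : Set V) : Set V :=
  {y | X ∩ (G.neighborSet y ∪ {y}) = {x}}

open SimpleGraph Finset

lemma min_le_rdf {V : Type*} [Fintype V] {G : SimpleGraph V} {f g : V → ℕ}
    (hf : IsMinRDF G f) (hg : IsRDF G g) : ∑ v, f v ≤ ∑ v, g v := by
  rw [hf.2]
  exact Nat.sInf_le ⟨g, hg, rfl⟩

lemma no_triangle {V : Type*} {G : SimpleGraph V} (hG : G.IsAcyclic)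
    {a b c : V} (hab : G.Adj a b) (hbc : G.Adj b c) (hac : G.Adj a c) : False := by
  have h := hG.path_unique ⟨Walk.cons hac Walk.nil, by simp [hac.ne]⟩
    ⟨Walk.cons hab (Walk.cons hbc Walk.nil), by simp [hab.ne, hbc.ne, hac.ne]⟩
  simpa using congrArg (fun p : G.Path a c => p.1.length) h

lemma no_square {V : Type*} {G : SimpleGraph V} (hG : G.IsAcyclic)
    {a b c d : V} (hbd : b ≠ d) (hac : a ≠ c)
    (hab : G.Adj a b) (hbc : G.Adj b c) (had : G.Adj a d) (hdc : G.Adj d c) : False := by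
  have h := hG.path_unique
    ⟨Walk.cons hab (Walk.cons hbc Walk.nil), by simp [hab.ne, hbc.ne, hac]⟩
    ⟨Walk.cons had (Walk.cons hdc Walk.nil), by simp [had.ne, hdc.ne, hac]⟩
  have := congrArg (fun p : G.Path a c => p.1.support) h
  simp at this
  exact hbd this

/-- In a minimum RDF, no vertex labeled 1 is adjacent to a vertex labeled 2. -/
lemma no_one_adj_two {V : Type*} [Fintype V] [DecidableEq V] {G : SimpleGraph V}
    {f : V → ℕ} (hf : IsMinRDF G f) {x y : V} (hx : f x = 2) (hy : f y = 1)
    (hxy : G.Adj x y) : False := by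
  have hxney : x ≠ y := fun h => by rw [h, hy] at hx; omega
  set g := Function.update f y 0 with hg
  have hgrdf : IsRDF G g := by
    constructor
    · intro z
      by_cases hz : z = y
      · simp [hg, hz]
      · simp [hg, Function.update_of_ne hz]
        exact hf.1.1 z
    · intro z hz
      by_cases hzy : z = y
      · exact ⟨x, by rw [hzy]; exact hxy.symm, by simp [hg, Function.update_of_ne hxney, hx]⟩
      · rw [hg, Function.update_of_ne hzy] at hz
        obtain ⟨t, ht, ht2⟩ := hf.1.2 z hz
        have hty : t ≠ y := fun h => by rw [h, hy] at ht2; omega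
        exact ⟨t, ht, by simp [hg, Function.update_of_ne hty, ht2]⟩
  have hle := min_le_rdf hf hgrdf
  have h1 : ∑ w, g w = 0 + ∑ w ∈ Finset.univ \ {y}, f w :=
    Finset.sum_update_of_mem (Finset.mem_univ y) f 0
  have h2 : ∑ w, f w = ∑ w ∈ Finset.univ \ {y}, f w + f y :=
    Finset.sum_eq_sum_sdiff_singleton_add (Finset.mem_univ y) f
  omega

/-- In a minimum RDF, a vertex labeled 2 which has a neighbor labeled 2 has at least two
distinct "zero private neighbors". -/
lemma two_zero_privates {V : Type*} [Fintype V] [DecidableEq V] {G : SimpleGraph V}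
    {f : V → ℕ} (hf : IsMinRDF G f) {x w : V} (hx : f x = 2)
    (hxw : G.Adj x w) (hw : f w = 2) :
    ∃ p q : V, p ≠ q ∧ (f p = 0 ∧ ∀ t, G.Adj p t → f t = 2 → t = x) ∧
      (f q = 0 ∧ ∀ t, G.Adj q t → f t = 2 → t = x) := by
  by_contra hcon
  have hwx : w ≠ x := fun h => (G.irrefl (h ▸ hxw))
  by_cases hex : ∃ p, f p = 0 ∧ ∀ t, G.Adj p t → f t = 2 → t = x
  · obtain ⟨p, hp0, hppriv⟩ := hex
    have huniq : ∀ z, f z = 0 → (∀ t, G.Adj z t → f t = 2 → t = x) → z = p := by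
      intro z hz0 hzpriv
      by_contra hne
      exact hcon ⟨p, z, fun h => hne h.symm, ⟨hp0, hppriv⟩, ⟨hz0, hzpriv⟩⟩
    have hpx : p ≠ x := fun h => by rw [h, hx] at hp0; omega
    have hpw : p ≠ w := fun h => by rw [h, hw] at hp0; omega
    -- unique zero-private neighbor: replace f x := 0, f p := 1
    set g := Function.update (Function.update f x 0) p 1 with hg
    have hgx : g x = 0 := by simp [hg, Function.update_of_ne (Ne.symm hpx)]
    have hgp : g p = 1 := by simp [hg]
    have hgother : ∀ z, z ≠ x → z ≠ p → g z = f z := by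
      intro z hzx hzp
      simp [hg, Function.update_of_ne hzp, Function.update_of_ne hzx]
    have hgrdf : IsRDF G g := by
      constructor
      · intro z
        by_cases hzp : z = p
        · simp [hzp, hgp]
        · by_cases hzx : z = x
          · simp [hzx, hgx]
          · rw [hgother z hzx hzp]; exact hf.1.1 z
      · intro z hz
        by_cases hzp : z = p
        · rw [hzp, hgp] at hz; omega
        by_cases hzx : z = x
        · refine ⟨w, hzx ▸ hxw, ?_⟩
          rw [hgother w hwx (Ne.symm hpw), hw]
        · rw [hgother z hzx hzp] at hz
          have : ¬ (∀ t, G.Adj z t → f t = 2 → t = x) := fun h => hzp (huniq z hz h)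
          push_neg at this
          obtain ⟨t, ht, ht2, htx⟩ := this
          have htp : t ≠ p := fun h => by rw [h, hp0] at ht2; omega
          exact ⟨t, ht, by rw [hgother t htx htp]; exact ht2⟩
    have hle := min_le_rdf hf hgrdf
    have hxmem : x ∈ Finset.univ \ ({p} : Finset V) := by
      simp [Finset.mem_sdiff, hpx.symm]
    have h1 : ∑ z, g z = 1 + ∑ z ∈ Finset.univ \ {p}, Function.update f x 0 z :=
      Finset.sum_update_of_mem (Finset.mem_univ p) _ 1
    have h2 : ∑ z ∈ Finset.univ \ {p}, Function.update f x 0 z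
        = 0 + ∑ z ∈ (Finset.univ \ {p}) \ {x}, f z :=
      Finset.sum_update_of_mem hxmem f 0
    have h3 : ∑ z ∈ Finset.univ \ ({p} : Finset V), f z
        = ∑ z ∈ (Finset.univ \ {p}) \ {x}, f z + f x :=
      Finset.sum_eq_sum_sdiff_singleton_add hxmem f
    have h4 : ∑ z, f z = ∑ z ∈ Finset.univ \ ({p} : Finset V), f z + f p :=
      Finset.sum_eq_sum_sdiff_singleton_add (Finset.mem_univ p) f
    omega
  · -- no zero private neighbor: replace f x := 0
    push_neg at hex
    set g := Function.update f x 0 with hg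
    have hgrdf : IsRDF G g := by
      constructor
      · intro z
        by_cases hz : z = x
        · simp [hg, hz]
        · rw [hg, Function.update_of_ne hz]; exact hf.1.1 z
      · intro z hz
        by_cases hzx : z = x
        · exact ⟨w, hzx ▸ hxw, by rw [hg, Function.update_of_ne hwx, hw]⟩
        · rw [hg, Function.update_of_ne hzx] at hz
          obtain ⟨t, ht, ht2, htx⟩ := hex z hz
          exact ⟨t, ht, by rw [hg, Function.update_of_ne htx]; exact ht2⟩
    have hle := min_le_rdf hf hgrdf
    have h1 : ∑ z, g z = 0 + ∑ z ∈ Finset.univ \ {x}, f z :=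
      Finset.sum_update_of_mem (Finset.mem_univ x) f 0
    have h2 : ∑ z, f z = ∑ z ∈ Finset.univ \ {x}, f z + f x :=
      Finset.sum_eq_sum_sdiff_singleton_add (Finset.mem_univ x) f
    omega

theorem tree_swap_two_zero {V : Type*} [Fintype V] [DecidableEq V]
    (G : SimpleGraph V) (hG : G.IsTree) (f : V → ℕ) (hf : IsMinRDF G f)
    (u v : V) (hu : f u = 2) (hv : f v = 0)
    (h1 : IsRDF G (Function.update (Function.update f u 0) v 2)) :
    G.Adj u v ∧ privateNbrs G u {w | f w = 2} = {u, v} := by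
  have hac := hG.IsAcyclic
  have huv : u ≠ v := fun h => by rw [h, hv] at hu; omega
  set f₁ := Function.update (Function.update f u 0) v 2 with hf₁def
  have hf₁u : f₁ u = 0 := by simp [hf₁def, Function.update_of_ne huv]
  have hf₁v : f₁ v = 2 := by simp [hf₁def]
  have hf₁other : ∀ z, z ≠ u → z ≠ v → f₁ z = f z := by
    intro z hzu hzv
    simp [hf₁def, Function.update_of_ne hzv, Function.update_of_ne hzu]
  -- f₁ has the same weight as f
  have humem : u ∈ Finset.univ \ ({v} : Finset V) := by
    simp [Finset.mem_sdiff, huv]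
  have hs1 : ∑ z, f₁ z = 2 + ∑ z ∈ Finset.univ \ {v}, Function.update f u 0 z :=
    Finset.sum_update_of_mem (Finset.mem_univ v) _ 2
  have hs2 : ∑ z ∈ Finset.univ \ {v}, Function.update f u 0 z
      = 0 + ∑ z ∈ (Finset.univ \ {v}) \ {u}, f z :=
    Finset.sum_update_of_mem humem f 0
  have hs3 : ∑ z ∈ Finset.univ \ ({v} : Finset V), f z
      = ∑ z ∈ (Finset.univ \ {v}) \ {u}, f z + f u :=
    Finset.sum_eq_sum_sdiff_singleton_add humem f
  have hs4 : ∑ z, f z = ∑ z ∈ Finset.univ \ ({v} : Finset V), f z + f v :=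
    Finset.sum_eq_sum_sdiff_singleton_add (Finset.mem_univ v) f
  have hsum : ∑ z, f₁ z = ∑ z, f z := by omega
  have hf₁min : IsMinRDF G f₁ := ⟨h1, by rw [hsum]; exact hf.2⟩
  -- Part A : u and v are adjacent
  have hadj : G.Adj u v := by
    by_contra hadj
    obtain ⟨y, hy, hy2⟩ := h1.2 u hf₁u
    have hyv : y ≠ v := fun h => hadj (h ▸ hy)
    have hyu : y ≠ u := fun h => G.irrefl (h ▸ hy)
    rw [hf₁other y hyu hyv] at hy2
    obtain ⟨p, q, hpq, ⟨hp0, hppriv⟩, ⟨hq0, hqpriv⟩⟩ := two_zero_privates hf hu hy hy2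
    have key : ∀ r, f r = 0 → (∀ t, G.Adj r t → f t = 2 → t = u) → G.Adj u r ∧ G.Adj r v := by
      intro r hr0 hrpriv
      obtain ⟨t, ht, ht2⟩ := hf.1.2 r hr0
      have htu : t = u := hrpriv t ht ht2
      have hur : G.Adj u r := (htu ▸ ht).symm
      have hrv : r ≠ v := fun h => hadj (h ▸ hur)
      have hru : r ≠ u := fun h => by rw [h, hu] at hr0; omega
      have hfr1 : f₁ r = 0 := by rw [hf₁other r hru hrv]; exact hr0
      obtain ⟨z, hz, hz2⟩ := h1.2 r hfr1
      by_cases hzv : z = v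
      · exact ⟨hur, hzv ▸ hz⟩
      · have hzu : z ≠ u := fun h => by rw [h, hf₁u] at hz2; omega
        rw [hf₁other z hzu hzv] at hz2
        exact absurd (hrpriv z hz hz2) hzu
    obtain ⟨hup, hpv⟩ := key p hp0 hppriv
    obtain ⟨huq, hqv⟩ := key q hq0 hqpriv
    exact no_square hac hpq huv hup hpv huq hqv
  -- Part B1 : the only vertex labeled 2 in the closed neighborhood of v is u
  have hB1 : ∀ w, G.Adj v w → f w = 2 → w = u := by
    intro w hvw hw2
    by_contra hwu
    have hwv : w ≠ v := fun h => G.irrefl (h ▸ hvw)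
    have hf₁w : f₁ w = 2 := by rw [hf₁other w hwu hwv]; exact hw2
    obtain ⟨p, q, hpq, ⟨hp0, hppriv⟩, ⟨hq0, hqpriv⟩⟩ :=
      two_zero_privates hf₁min hf₁v hvw hf₁w
    have key : ∀ r, r ≠ u → f₁ r = 0 → (∀ t, G.Adj r t → f₁ t = 2 → t = v) → False := by
      intro r hru hr0 hrpriv
      have hrv : r ≠ v := fun h => by rw [h, hf₁v] at hr0; omega
      have hfr0 : f r = 0 := by rw [← hf₁other r hru hrv]; exact hr0
      obtain ⟨t, ht, ht2⟩ := hf.1.2 r hfr0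
      have htv : t ≠ v := fun h => by rw [h, hv] at ht2; omega
      by_cases htu : t = u
      · subst htu
        obtain ⟨s, hs, hs2⟩ := h1.2 r hr0
        have hsv : s = v := hrpriv s hs hs2
        exact no_triangle hac hadj (hsv ▸ hs).symm ht.symm
      · have ht2' : f₁ t = 2 := by rw [hf₁other t htu htv]; exact ht2
        exact htv (hrpriv t ht ht2')
    by_cases hpu : p = u
    · exact key q (fun h => hpq (hpu.trans h.symm)) hq0 hqpriv
    · exact key p hpu hp0 hppriv
  -- Part B2 : no neighbor of u is labeled 2
  have hB2 : ∀ w, G.Adj u w → f w ≠ 2 := by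
    intro w huw hw2
    obtain ⟨p, q, hpq, hp, hq⟩ := two_zero_privates hf hu huw hw2
    have key : ∀ r, r ≠ v → f r = 0 → (∀ t, G.Adj r t → f t = 2 → t = u) → False := by
      intro r hrv hr0 hrpriv
      have hru : r ≠ u := fun h => by rw [h, hu] at hr0; omega
      obtain ⟨t, ht, ht2⟩ := hf.1.2 r hr0
      have htu := hrpriv t ht ht2
      have hur : G.Adj u r := (htu ▸ ht).symm
      have hf₁r : f₁ r = 0 := by rw [hf₁other r hru hrv]; exact hr0
      obtain ⟨z, hz, hz2⟩ := h1.2 r hf₁r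
      by_cases hzv : z = v
      · exact no_triangle hac hur (hzv ▸ hz) hadj
      · have hzu : z ≠ u := fun h => by rw [h, hf₁u] at hz2; omega
        rw [hf₁other z hzu hzv] at hz2
        exact hzu (hrpriv z hz hz2)
    by_cases hpv : p = v
    · exact key q (fun h => hpq (hpv.trans h.symm)) hq.1 hq.2
    · exact key p hpv hp.1 hp.2
  refine ⟨hadj, ?_⟩
  ext y
  simp only [privateNbrs, Set.mem_setOf_eq, Set.mem_insert_iff, Set.mem_singleton_iff]
  constructor
  · intro hy
    by_contra hcon
    push_neg at hcon
    obtain ⟨hyu, hyv⟩ := hcon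
    have humem' : u ∈ {w | f w = 2} ∩ (G.neighborSet y ∪ {y}) := by
      rw [hy]; exact rfl
    obtain ⟨hu2, humem2⟩ := humem'
    have hyadju : G.Adj y u := by
      rcases humem2 with h | h
      · exact h
      · exact absurd h.symm hyu
    have hfy2 : f y ≠ 2 := by
      intro h2
      have : y ∈ ({u} : Set V) := hy ▸ ⟨h2, Or.inr rfl⟩
      exact hyu this
    have hle := hf.1.1 y
    have : f y = 0 ∨ f y = 1 := by omega
    rcases this with hy0 | hy1
    · -- y has label 0, so under f₁ it must be dominated by v, giving a triangle
      have hf₁y : f₁ y = 0 := by rw [hf₁other y hyu hyv]; exact hy0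
      obtain ⟨z, hz, hz2⟩ := h1.2 y hf₁y
      by_cases hzv : z = v
      · exact no_triangle hac hyadju.symm (hzv ▸ hz) hadj
      · have hzu : z ≠ u := fun h => by rw [h, hf₁u] at hz2; omega
        rw [hf₁other z hzu hzv] at hz2
        have : z ∈ ({u} : Set V) := hy ▸ ⟨hz2, Or.inl hz⟩
        exact hzu this
    · exact no_one_adj_two hf hu hy1 hyadju.symm
  · rintro (rfl | rfl)
    · ext z
      simp only [Set.mem_inter_iff, Set.mem_setOf_eq, Set.mem_union,
        SimpleGraph.mem_neighborSet, Set.mem_singleton_iff]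
      constructor
      · rintro ⟨hz2, hadjz | hzy⟩
        · exact absurd hz2 (hB2 z hadjz)
        · exact hzy
      · rintro rfl
        exact ⟨hu, Or.inr rfl⟩
    · ext z
      simp only [Set.mem_inter_iff, Set.mem_setOf_eq, Set.mem_union,
        SimpleGraph.mem_neighborSet, Set.mem_singleton_iff]
      constructor
      · rintro ⟨hz2, hadjz | hzy⟩
        · exact hB1 z hadjz hz2
        · rw [hzy, hv] at hz2; omega
      · rintro rfl
        exact ⟨hu, Or.inl hadj.symm⟩
end
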